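/- arXiv:2203.10390 — 2 statements merged into one kernel-verified Lean document; each statement's English description precedes it below -/
import Mathlib

section
/- In any feasible schedule of a job system, let s ≤ e be real numbers and let J be a job whose execution straddles s, i.e., s_J < s < s_J + B_J. Let D be the sum of the lengths B_j over all jobs j ≠ J with s ≤ r_j and d_j ≤ e. Then D + (min(s_J + B_J, e) − s) ≤ e − s; that is, the demand of [s, e] plus the portion of J's execution intruding into [s, e] cannot exceed the length of the interval. -/
/-!
Every other job with release time at least `s` starts after `J` has started, so by disjointness it
starts only once `J` has finished; with deadline at most `e`, it runs inside `[min (sched J + B J) e, e]`.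
These executions are pairwise disjoint, so comparing Lebesgue measures bounds their total length by
`e - min (sched J + B J) e`, which is the claim.
-/

open Set MeasureTheory

theorem le_of_disjoint_Ico_of_le {α : Type*} [LinearOrder α] {a b c d : α}
    (h : Disjoint (Ico a b) (Ico c d)) (hca : c ≤ a) (hab : a < b) : d ≤ a := by
  rw [Ico_disjoint_Ico, max_eq_left hca] at h
  exact (min_le_iff.1 h).resolve_left hab.not_ge

theorem Finset.sum_sub_le_of_pairwiseDisjoint_Ico {ι : Type*} {t : Finset ι} {a b : ι → ℝ}
    {x y : ℝ} (hxy : x ≤ y) (hab : ∀ i ∈ t, a i ≤ b i)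
    (hdisj : (t : Set ι).PairwiseDisjoint fun i => Set.Ico (a i) (b i))
    (hsub : ∀ i ∈ t, Set.Ico (a i) (b i) ⊆ Set.Icc x y) :
    ∑ i ∈ t, (b i - a i) ≤ y - x := by
  rw [← ENNReal.ofReal_le_ofReal_iff (sub_nonneg.2 hxy),
    ENNReal.ofReal_sum_of_nonneg fun i hi => sub_nonneg.2 (hab i hi)]
  calc ∑ i ∈ t, ENNReal.ofReal (b i - a i)
      = volume (⋃ i ∈ t, Set.Ico (a i) (b i)) := by
        rw [measure_biUnion_finset hdisj fun _ _ => measurableSet_Ico]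
        simp only [Real.volume_Ico]
    _ ≤ volume (Set.Icc x y) := measure_mono (iUnion₂_subset hsub)
    _ = ENNReal.ofReal (y - x) := Real.volume_Icc

theorem demand_plus_intrusion_le_interval_length_general
    {ι : Type*} [Fintype ι] [DecidableEq ι]
    (r d B sched : ι → ℝ)
    (hB : ∀ j, 0 < B j)
    (hrel : ∀ j, r j ≤ sched j)
    (hdl : ∀ j, sched j + B j ≤ d j)
    (hdisj : ∀ j k, j ≠ k →
      Disjoint (Set.Ico (sched j) (sched j + B j))
               (Set.Ico (sched k) (sched k + B k)))
    (s e : ℝ)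
    (J : ι) (hJ1 : sched J < s)
    (D : ℝ)
    (hD : D = ∑ j ∈ Finset.univ.filter (fun j => j ≠ J ∧ s ≤ r j ∧ d j ≤ e), B j) :
    D + (min (sched J + B J) e - s) ≤ e - s := by
  have hinside : ∀ j ∈ Finset.univ.filter (fun j => j ≠ J ∧ s ≤ r j ∧ d j ≤ e),
      Ico (sched j) (sched j + B j) ⊆ Icc (min (sched J + B J) e) e := by
    intro j hj
    obtain ⟨hjJ, hsr, hde⟩ := (Finset.mem_filter.1 hj).2
    have hJj : sched J + B J ≤ sched j :=
      le_of_disjoint_Ico_of_le (hdisj j J hjJ) (by linarith [hrel j]) (by linarith [hB j])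
    exact Ico_subset_Icc_self.trans
      (Icc_subset_Icc (min_le_left _ _ |>.trans hJj) ((hdl j).trans hde))
  have hdemand : D ≤ e - min (sched J + B J) e := by
    rw [hD]
    simpa only [add_sub_cancel_left] using
      Finset.sum_sub_le_of_pairwiseDisjoint_Ico (min_le_right _ e)
        (fun j _ => (lt_add_of_pos_right _ (hB j)).le)
        (fun j _ k _ hjk => hdisj j k hjk) hinside
  linarith

/-- In any feasible schedule of a job system, if the execution of a job `J`
straddles the left endpoint `s` of an interval `[s, e]` (i.e.
`sched J < s < sched J + B J`), then the demand `D` of `[s, e]`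
(the sum of lengths of all other jobs released at or after `s` with deadline
at or before `e`) plus the portion `min (sched J + B J) e - s` of `J`'s
execution intruding into `[s, e]` is at most the interval length `e - s`. -/
theorem demand_plus_intrusion_le_interval_length
    {ι : Type*} [Fintype ι] [DecidableEq ι]
    (r d B sched : ι → ℝ)
    (hB : ∀ j, 0 < B j)
    (hrel : ∀ j, r j ≤ sched j)
    (hdl : ∀ j, sched j + B j ≤ d j)
    (hdisj : ∀ j k, j ≠ k →
      Disjoint (Set.Ico (sched j) (sched j + B j))
               (Set.Ico (sched k) (sched k + B k)))
    (s e : ℝ) (hse : s ≤ e)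
    (J : ι) (hJ1 : sched J < s) (hJ2 : s < sched J + B J)
    (D : ℝ)
    (hD : D = ∑ j ∈ Finset.univ.filter (fun j => j ≠ J ∧ s ≤ r j ∧ d j ≤ e), B j) :
    D + (min (sched J + B J) e - s) ≤ e - s :=
  demand_plus_intrusion_le_interval_length_general r d B sched hB hrel hdl hdisj s e J hJ1 D hD
end

section
/- Backward direction of the reduction: if the constructed job system admits a feasible schedule, then there exists a partition of the index set {1, …, 3n} into n subsets each of which contains exactly 3 elements and satisfies ∑_{i ∈ A_k} x_i = M for every k; that is, the underlying 3-Partition instance is a yes-instance. -/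
/-!
A feasible schedule must start every blocker at its release time, so the blockers occupy
`[2kM, (2k+1)M)` and leave `n` gaps `[(2k+1)M, (2k+2)M)` of length `M`. A partition job cannot
straddle a blocker, so it runs inside one gap; the jobs in a gap have total length at most `M`,
and since all lengths add up to `nM`, every gap is filled exactly. Finally `M/4 < x_i < M/2`
forces exactly three jobs into each gap.
-/

/-- Release times of the constructed job system: blocker `k` is released at
`2kM`, every partition job at `0`. -/
noncomputable def rel (n M : ℕ) : Fin n ⊕ Fin (3 * n) → ℝ :=
  Sum.elim (fun k => ((2 * (k : ℕ) * M : ℕ) : ℝ)) (fun _ => 0)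

/-- Deadlines of the constructed job system: blocker `k` has deadline
`(2k+1)M`, every partition job has deadline `2nM`. -/
noncomputable def dl (n M : ℕ) : Fin n ⊕ Fin (3 * n) → ℝ :=
  Sum.elim (fun k => (((2 * (k : ℕ) + 1) * M : ℕ) : ℝ)) (fun _ => ((2 * n * M : ℕ) : ℝ))

/-- Lengths of the constructed job system: every blocker has length `M`,
partition job `i` has length `x i`. -/
noncomputable def len (n M : ℕ) (x : Fin (3 * n) → ℕ) : Fin n ⊕ Fin (3 * n) → ℝ :=
  Sum.elim (fun _ => (M : ℝ)) (fun i => (x i : ℝ))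

/-- A schedule (assignment of start times) of the constructed job system is
feasible if every job starts at or after its release time, finishes by its
deadline, and the execution intervals of distinct jobs are pairwise
disjoint. -/
def Feasible (n M : ℕ) (x : Fin (3 * n) → ℕ)
    (sched : Fin n ⊕ Fin (3 * n) → ℝ) : Prop :=
  (∀ j, rel n M j ≤ sched j) ∧
  (∀ j, sched j + len n M x j ≤ dl n M j) ∧
  (∀ j k, j ≠ k →
    Disjoint (Set.Ico (sched j) (sched j + len n M x j))
             (Set.Ico (sched k) (sched k + len n M x k)))

open Set MeasureTheory

theorem exists_gap_of_disjoint_blocks {n : ℕ} {T s ℓ : ℝ} (hT : 0 < T) (hℓ : 0 < ℓ)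
    (hs : 0 ≤ s) (hend : s + ℓ ≤ 2 * n * T)
    (hdisj : ∀ k : Fin n, Disjoint (Ico s (s + ℓ)) (Ico (2 * k * T) (2 * k * T + T))) :
    ∃ k : Fin n, (2 * k + 1) * T ≤ s ∧ s + ℓ ≤ (2 * k + 2) * T := by
  have h2T : 0 < 2 * T := by positivity
  set k := ⌊s / (2 * T)⌋₊
  have hk_le : 2 * k * T ≤ s := by
    have := (le_div_iff₀ h2T).1 (Nat.floor_le (div_nonneg hs h2T.le))
    linarith
  have hk_lt : s < 2 * (k + 1) * T := by
    have := (div_lt_iff₀ h2T).1 (Nat.lt_floor_add_one (s / (2 * T)))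
    linarith
  have hkn : k < n := by
    by_contra! hnk
    have : (n : ℝ) * T ≤ k * T := by gcongr
    linarith
  refine ⟨⟨k, hkn⟩, ?_, ?_⟩
  · by_contra! hstart
    exact Set.disjoint_left.1 (hdisj ⟨k, hkn⟩) (left_mem_Ico.2 (by linarith))
      ⟨hk_le, by linarith⟩
  · by_contra! hover
    have hk1n : k + 1 < n := by
      by_contra! hnk
      have : (n : ℝ) * T ≤ (k + 1) * T := by gcongr; exact_mod_cast hnk
      linarith
    have hmem : 2 * (k + 1) * T ∈ Ico s (s + ℓ) := ⟨hk_lt.le, by linarith⟩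
    exact Set.disjoint_left.1 (hdisj ⟨k + 1, hk1n⟩) hmem
      ⟨by push_cast; linarith, by push_cast; linarith⟩

theorem sum_le_of_pairwiseDisjoint_Ico {ι : Type*} (s : Finset ι) (a ℓ : ι → ℝ) {b c : ℝ}
    (hℓ : ∀ i ∈ s, 0 ≤ ℓ i)
    (hdisj : (s : Set ι).PairwiseDisjoint fun i => Ico (a i) (a i + ℓ i))
    (hsub : ∀ i ∈ s, Ico (a i) (a i + ℓ i) ⊆ Ico b c) (hbc : b ≤ c) :
    ∑ i ∈ s, ℓ i ≤ c - b := by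
  have hvol : volume (⋃ i ∈ s, Ico (a i) (a i + ℓ i)) ≤ volume (Ico b c) :=
    measure_mono (iUnion₂_subset hsub)
  rw [measure_biUnion_finset hdisj fun _ _ => measurableSet_Ico, Real.volume_Ico] at hvol
  simp only [Real.volume_Ico, add_sub_cancel_left] at hvol
  rwa [← ENNReal.ofReal_sum_of_nonneg hℓ, ENNReal.ofReal_le_ofReal_iff (by linarith)] at hvol

theorem card_eq_three_of_sum_eq {ι : Type*} (s : Finset ι) (x : ι → ℕ) {M : ℕ} (hM : 0 < M)
    (hlow : ∀ i ∈ s, M < 4 * x i) (hhigh : ∀ i ∈ s, 2 * x i < M)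
    (hsum : ∑ i ∈ s, x i = M) :
    s.card = 3 := by
  have hs : s.Nonempty := Finset.nonempty_of_sum_ne_zero (hsum ▸ hM.ne')
  have hlt4 : s.card * M < 4 * M := by
    calc s.card * M = ∑ _i ∈ s, M := by simp
      _ < ∑ i ∈ s, 4 * x i := Finset.sum_lt_sum_of_nonempty hs hlow
      _ = 4 * M := by rw [← Finset.mul_sum, hsum]
  have hgt2 : 2 * M < s.card * M := by
    calc 2 * M = ∑ i ∈ s, 2 * x i := by rw [← Finset.mul_sum, hsum]
      _ < ∑ _i ∈ s, M := Finset.sum_lt_sum_of_nonempty hs hhigh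
      _ = s.card * M := by simp
  have := Nat.lt_of_mul_lt_mul_right hlt4
  have := Nat.lt_of_mul_lt_mul_right hgt2
  omega

namespace Feasible

variable {n M : ℕ} {x : Fin (3 * n) → ℕ} {sched : Fin n ⊕ Fin (3 * n) → ℝ}

theorem blocker_start (h : Feasible n M x sched) (k : Fin n) :
    sched (.inl k) = 2 * k * M := by
  have hrel := h.1 (.inl k)
  have hdl := h.2.1 (.inl k)
  simp only [rel, dl, len, Sum.elim_inl] at hrel hdl
  push_cast at hrel hdl
  linarith

theorem disjoint_jobs (h : Feasible n M x sched) {i j : Fin (3 * n)} (hij : i ≠ j) :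
    Disjoint (Ico (sched (.inr i)) (sched (.inr i) + x i))
      (Ico (sched (.inr j)) (sched (.inr j) + x j)) := by
  simpa only [len, Sum.elim_inr] using h.2.2 (.inr i) (.inr j) (by simpa using hij)

theorem exists_gap (h : Feasible n M x sched) (hM : 0 < M) (i : Fin (3 * n)) (hxi : 0 < x i) :
    ∃ k : Fin n, (2 * k + 1) * (M : ℝ) ≤ sched (.inr i) ∧
      sched (.inr i) + x i ≤ (2 * k + 2) * (M : ℝ) := by
  refine exists_gap_of_disjoint_blocks (by exact_mod_cast hM) (by exact_mod_cast hxi)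
    (by simpa [rel] using h.1 (.inr i)) ?_ fun k => ?_
  · simpa [dl, len] using h.2.1 (.inr i)
  · simpa only [len, Sum.elim_inl, Sum.elim_inr, h.blocker_start]
      using h.2.2 (.inr i) (.inl k) (by simp)

theorem sum_le_of_mem_gap (h : Feasible n M x sched) (s : Finset (Fin (3 * n))) (k : Fin n)
    (hs : ∀ i ∈ s, (2 * k + 1) * (M : ℝ) ≤ sched (.inr i) ∧
      sched (.inr i) + x i ≤ (2 * k + 2) * (M : ℝ)) :
    ∑ i ∈ s, x i ≤ M := by
  have hgap := sum_le_of_pairwiseDisjoint_Ico s (fun i => sched (.inr i)) (fun i => (x i : ℝ))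
    (fun _ _ => Nat.cast_nonneg _) (fun i _ j _ hij => h.disjoint_jobs hij)
    (fun i hi => Ico_subset_Ico (hs i hi).1 (hs i hi).2) (by gcongr; norm_num)
  have hwidth : ((2 * k + 2) * M - (2 * k + 1) * M : ℝ) = M := by ring
  exact_mod_cast hgap.trans_eq hwidth

end Feasible

theorem three_partition_of_feasible_general
    (n M : ℕ) (hM : 0 < M)
    (x : Fin (3 * n) → ℕ) (hx : ∀ i, 0 < x i)
    (hlow : ∀ i, M < 4 * x i) (hhigh : ∀ i, 2 * x i < M)
    (hsum : ∑ i, x i = n * M)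
    (hfeas : ∃ sched : Fin n ⊕ Fin (3 * n) → ℝ, Feasible n M x sched) :
    ∃ A : Fin n → Finset (Fin (3 * n)),
      (∀ i : Fin (3 * n), ∃! k : Fin n, i ∈ A k) ∧
      (∀ k : Fin n, (A k).card = 3 ∧ ∑ i ∈ A k, x i = M) := by
  obtain ⟨sched, hsched⟩ := hfeas
  choose gap hgap using fun i => hsched.exists_gap hM i (hx i)
  set A : Fin n → Finset (Fin (3 * n)) := fun k => {i | gap i = k}
  have hle : ∀ k, ∑ i ∈ A k, x i ≤ M := fun k =>
    hsched.sum_le_of_mem_gap (A k) k fun i hi => by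
      obtain rfl : gap i = k := by simpa [A] using hi
      exact hgap i
  have htotal : ∑ k, ∑ i ∈ A k, x i = ∑ _k : Fin n, M := by
    rw [Finset.sum_fiberwise, hsum]
    simp
  have hfill : ∀ k, ∑ i ∈ A k, x i = M := fun k =>
    (Finset.sum_eq_sum_iff_of_le fun k _ => hle k).1 htotal k (Finset.mem_univ k)
  refine ⟨A, fun i => ⟨gap i, by simp [A], fun k hk => ?_⟩, fun k => ⟨?_, hfill k⟩⟩
  · exact (by simpa [A] using hk : gap i = k).symm
  · exact card_eq_three_of_sum_eq _ x hM (fun i _ => hlow i) (fun i _ => hhigh i) (hfill k)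

/-- **Backward direction of the reduction.**
If the constructed job system admits a feasible schedule, then the index set
of the 3-Partition instance can be partitioned into `n` subsets, each having
exactly 3 elements and summing to `M`; i.e., the underlying 3-Partition
instance is a yes-instance. -/
theorem three_partition_of_feasible
    (n M : ℕ) (hn : 0 < n) (hM : 0 < M)
    (x : Fin (3 * n) → ℕ) (hx : ∀ i, 0 < x i)
    (hlow : ∀ i, M < 4 * x i) (hhigh : ∀ i, 2 * x i < M)
    (hsum : ∑ i, x i = n * M)
    (hfeas : ∃ sched : Fin n ⊕ Fin (3 * n) → ℝ, Feasible n M x sched) :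
    ∃ A : Fin n → Finset (Fin (3 * n)),
      (∀ i : Fin (3 * n), ∃! k : Fin n, i ∈ A k) ∧
      (∀ k : Fin n, (A k).card = 3 ∧ ∑ i ∈ A k, x i = M) :=
  three_partition_of_feasible_general n M hM x hx hlow hhigh hsum hfeas
end
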